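/- Let a, b, c, d, e, f, g, h : ℝ → ℝ be smooth with f' > 0 and g ≠ 0 everywhere, and let A, B, C, D, E : ℝ → ℝ be differentiable and satisfy the degree-4 transformation identities (as in the context). Define I₀ = a, I₁ = 8ac − 3b², I₂ = 3(ab' − a'b) + ac² − 3abd + 12a²e, I₃ = 8aa'(4ac − 3b²) + 24a²bb' − 32a³c' − 3b⁵ + 64a³cd − 24a²b²d − 32a²bc² + 20ab³c, and let Ĩ₀, Ĩ₁, Ĩ₂, Ĩ₃ be the same expressions formed from (A,B,C,D,E). Then at every x with I₁(x) ≠ 0 one has Ĩ₁(f(x)) ≠ 0 and (Ĩ₂·Ĩ₀/Ĩ₁²)(f(x)) = (I₂·I₀/I₁²)(x) and (Ĩ₃/|Ĩ₁|^{5/2})(f(x)) = (I₃/|I₁|^{5/2})(x). That is, J₁ = I₂I₀/I₁² and J₂ = I₃/|I₁|^{5/2} are absolute differential invariants of generalized Abel equations of degree 4. -/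

import Mathlib

/-!
Under the transformation `I₀ = a`, `I₁`, `I₂`, `I₃` are multiplied by `(f'g³)⁻¹`, `(f'g²)⁻²`,
`(f'³g⁵)⁻¹` and `(f'g²)⁻⁵`. The derivatives of `A`, `B`, `C` at `f x` are read off by
differentiating the transformation identities (chain rule plus quotient rule), after which each
of these weight laws is a rational identity in the values and first derivatives of `a, …, h` at
`x`, in which the `f''` terms cancel. The weights then cancel in `J₁`, and in `J₂` because
`f'g² > 0`.
-/

/-- The relative invariant `I₁ = 8ac − 3b²` of degree-4 generalized Abel
equations. -/
noncomputable def abel4I1 (a b c : ℝ → ℝ) : ℝ → ℝ := fun x =>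
  8 * a x * c x - 3 * b x ^ 2

/-- The relative invariant `I₂ = 3(ab' − a'b) + ac² − 3abd + 12a²e`. -/
noncomputable def abel4I2 (a b c d e : ℝ → ℝ) : ℝ → ℝ := fun x =>
  3 * (a x * deriv b x - deriv a x * b x) + a x * c x ^ 2
    - 3 * a x * b x * d x + 12 * a x ^ 2 * e x

/-- The relative invariant
`I₃ = 8aa'(4ac − 3b²) + 24a²bb' − 32a³c' − 3b⁵ + 64a³cd − 24a²b²d − 32a²bc²
+ 20ab³c`. -/
noncomputable def abel4I3 (a b c d : ℝ → ℝ) : ℝ → ℝ := fun x =>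
  8 * a x * deriv a x * (4 * a x * c x - 3 * b x ^ 2)
    + 24 * a x ^ 2 * b x * deriv b x - 32 * a x ^ 3 * deriv c x
    - 3 * b x ^ 5 + 64 * a x ^ 3 * c x * d x - 24 * a x ^ 2 * b x ^ 2 * d x
    - 32 * a x ^ 2 * b x * c x ^ 2 + 20 * a x * b x ^ 3 * c x

theorem deriv_eq_div_of_comp_eq {A f P : ℝ → ℝ} {x p : ℝ}
    (hA : DifferentiableAt ℝ A (f x)) (hf : deriv f x ≠ 0)
    (hAP : ∀ y, A (f y) = P y) (hP : HasDerivAt P p x) :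
    deriv A (f x) = p / deriv f x := by
  have hAf : HasDerivAt (fun y => A (f y)) (deriv A (f x) * deriv f x) x :=
    hA.hasDerivAt.comp x (differentiableAt_of_deriv_ne_zero hf).hasDerivAt
  rw [funext hAP] at hAf
  rw [eq_div_iff hf]
  exact hAf.unique hP

theorem abs_div_sq_rpow_half {w : ℝ} (hw : 0 < w) (q : ℝ) (n : ℕ) :
    |q / w ^ 2| ^ ((n : ℝ) / 2) = |q| ^ ((n : ℝ) / 2) / w ^ n := by
  have hw2 : |w ^ 2| ^ ((n : ℝ) / 2) = w ^ n := by
    rw [abs_of_pos (by positivity), ← Real.rpow_natCast w 2, ← Real.rpow_mul hw.le,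
      ← Real.rpow_natCast]
    congr 1
    push_cast
    ring
  rw [abs_div, Real.div_rpow (abs_nonneg _) (abs_nonneg _), hw2]

/-- `dỹ/dx̃ = A ỹ⁴ + … + E` is the image of `y' = a y⁴ + … + e` under `x̃ = f x`, `ỹ = g x * y + h x`. -/
structure Abel4Transform (a b c d e f g h A B C D E : ℝ → ℝ) : Prop where
  A_comp : ∀ x, A (f x) = a x / (deriv f x * g x ^ 3)
  B_comp : ∀ x, B (f x) = (b x * g x - 4 * a x * h x) / (deriv f x * g x ^ 3)
  C_comp : ∀ x, C (f x) = (6 * a x * h x ^ 2 - 3 * b x * g x * h x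
      + c x * g x ^ 2) / (deriv f x * g x ^ 3)
  D_comp : ∀ x, D (f x) = (-4 * a x * h x ^ 3 + 3 * b x * g x * h x ^ 2
      - 2 * c x * g x ^ 2 * h x + d x * g x ^ 3 + deriv g x * g x ^ 2)
      / (deriv f x * g x ^ 3)
  E_comp : ∀ x, E (f x) = (a x * h x ^ 4 - b x * g x * h x ^ 3
      + c x * g x ^ 2 * h x ^ 2 - d x * g x ^ 3 * h x + e x * g x ^ 4
      + deriv h x * g x ^ 3 - deriv g x * g x ^ 2 * h x)
      / (deriv f x * g x ^ 3)

namespace Abel4Transform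

variable {a b c d e f g h A B C D E : ℝ → ℝ} {x : ℝ}

theorem abel4I1_eq (T : Abel4Transform a b c d e f g h A B C D E)
    (hf0 : deriv f x ≠ 0) (hg0 : g x ≠ 0) :
    abel4I1 A B C (f x) = abel4I1 a b c x / (deriv f x * g x ^ 2) ^ 2 := by
  simp only [abel4I1, T.A_comp, T.B_comp, T.C_comp]
  field_simp
  ring

theorem abel4I2_eq (T : Abel4Transform a b c d e f g h A B C D E)
    (ha : DifferentiableAt ℝ a x) (hb : DifferentiableAt ℝ b x)
    (hf : DifferentiableAt ℝ (deriv f) x) (hg : DifferentiableAt ℝ g x)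
    (hh : DifferentiableAt ℝ h x)
    (hA : DifferentiableAt ℝ A (f x)) (hB : DifferentiableAt ℝ B (f x))
    (hf0 : deriv f x ≠ 0) (hg0 : g x ≠ 0) :
    abel4I2 A B C D E (f x) = abel4I2 a b c d e x / (deriv f x ^ 3 * g x ^ 5) := by
  have hW := hf.hasDerivAt.mul (hg.hasDerivAt.pow 3)
  have hW0 : deriv f x * g x ^ 3 ≠ 0 := by positivity
  have hA' := deriv_eq_div_of_comp_eq hA hf0 T.A_comp (ha.hasDerivAt.div hW hW0)
  have hB' := deriv_eq_div_of_comp_eq hB hf0 T.B_comp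
    (((hb.hasDerivAt.mul hg.hasDerivAt).sub
      ((ha.hasDerivAt.const_mul 4).mul hh.hasDerivAt)).div hW hW0)
  simp only [abel4I2, T.A_comp, T.B_comp, T.C_comp, T.D_comp, T.E_comp, hA', hB',
    Pi.mul_apply, Pi.sub_apply, Pi.pow_apply]
  field_simp
  ring

theorem abel4I3_eq (T : Abel4Transform a b c d e f g h A B C D E)
    (ha : DifferentiableAt ℝ a x) (hb : DifferentiableAt ℝ b x)
    (hc : DifferentiableAt ℝ c x)
    (hf : DifferentiableAt ℝ (deriv f) x) (hg : DifferentiableAt ℝ g x)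
    (hh : DifferentiableAt ℝ h x)
    (hA : DifferentiableAt ℝ A (f x)) (hB : DifferentiableAt ℝ B (f x))
    (hC : DifferentiableAt ℝ C (f x))
    (hf0 : deriv f x ≠ 0) (hg0 : g x ≠ 0) :
    abel4I3 A B C D (f x) = abel4I3 a b c d x / (deriv f x * g x ^ 2) ^ 5 := by
  have hW := hf.hasDerivAt.mul (hg.hasDerivAt.pow 3)
  have hW0 : deriv f x * g x ^ 3 ≠ 0 := by positivity
  have hA' := deriv_eq_div_of_comp_eq hA hf0 T.A_comp (ha.hasDerivAt.div hW hW0)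
  have hB' := deriv_eq_div_of_comp_eq hB hf0 T.B_comp
    (((hb.hasDerivAt.mul hg.hasDerivAt).sub
      ((ha.hasDerivAt.const_mul 4).mul hh.hasDerivAt)).div hW hW0)
  have hC' := deriv_eq_div_of_comp_eq hC hf0 T.C_comp
    (((((ha.hasDerivAt.const_mul 6).mul (hh.hasDerivAt.pow 2)).sub
      (((hb.hasDerivAt.const_mul 3).mul hg.hasDerivAt).mul hh.hasDerivAt)).add
      (hc.hasDerivAt.mul (hg.hasDerivAt.pow 2))).div hW hW0)
  simp only [abel4I3, T.A_comp, T.B_comp, T.C_comp, T.D_comp, hA', hB', hC',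
    Pi.mul_apply, Pi.sub_apply, Pi.add_apply, Pi.pow_apply]
  field_simp
  ring

end Abel4Transform

theorem abel_deg4_absolute_invariants_general
    (a b c d e f g h A B C D E : ℝ → ℝ)
    (ha : ContDiff ℝ (⊤ : ℕ∞) a) (hb : ContDiff ℝ (⊤ : ℕ∞) b)
    (hc : ContDiff ℝ (⊤ : ℕ∞) c)
    (hf : ContDiff ℝ (⊤ : ℕ∞) f) (hg : ContDiff ℝ (⊤ : ℕ∞) g)
    (hh : ContDiff ℝ (⊤ : ℕ∞) h)
    (hf' : ∀ x, 0 < deriv f x) (hg0 : ∀ x, g x ≠ 0)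
    (hA : Differentiable ℝ A) (hB : Differentiable ℝ B)
    (hC : Differentiable ℝ C)
    (hAe : ∀ x, A (f x) = a x / (deriv f x * g x ^ 3))
    (hBe : ∀ x, B (f x) = (b x * g x - 4 * a x * h x) / (deriv f x * g x ^ 3))
    (hCe : ∀ x, C (f x) = (6 * a x * h x ^ 2 - 3 * b x * g x * h x
      + c x * g x ^ 2) / (deriv f x * g x ^ 3))
    (hDe : ∀ x, D (f x) = (-4 * a x * h x ^ 3 + 3 * b x * g x * h x ^ 2
      - 2 * c x * g x ^ 2 * h x + d x * g x ^ 3 + deriv g x * g x ^ 2)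
      / (deriv f x * g x ^ 3))
    (hEe : ∀ x, E (f x) = (a x * h x ^ 4 - b x * g x * h x ^ 3
      + c x * g x ^ 2 * h x ^ 2 - d x * g x ^ 3 * h x + e x * g x ^ 4
      + deriv h x * g x ^ 3 - deriv g x * g x ^ 2 * h x)
      / (deriv f x * g x ^ 3)) :
    ∀ x, abel4I1 a b c x ≠ 0 →
      abel4I1 A B C (f x) ≠ 0
      ∧ abel4I2 A B C D E (f x) * A (f x) / abel4I1 A B C (f x) ^ 2
        = abel4I2 a b c d e x * a x / abel4I1 a b c x ^ 2
      ∧ abel4I3 A B C D (f x) / |abel4I1 A B C (f x)| ^ ((5:ℝ)/2)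
        = abel4I3 a b c d x / |abel4I1 a b c x| ^ ((5:ℝ)/2) := by
  have hdiff {u : ℝ → ℝ} (hu : ContDiff ℝ (⊤ : ℕ∞) u) : Differentiable ℝ u :=
    hu.differentiable (by simp)
  have T : Abel4Transform a b c d e f g h A B C D E := ⟨hAe, hBe, hCe, hDe, hEe⟩
  intro x hI1
  have hfx : deriv f x ≠ 0 := (hf' x).ne'
  have hw : 0 < deriv f x * g x ^ 2 := mul_pos (hf' x) (sq_pos_of_ne_zero (hg0 x))
  have hf'x := hdiff (contDiff_infty_iff_deriv.mp hf).2 x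
  have hI1' := T.abel4I1_eq hfx (hg0 x)
  have hI2' := T.abel4I2_eq (hdiff ha x) (hdiff hb x) hf'x (hdiff hg x) (hdiff hh x)
    (hA (f x)) (hB (f x)) hfx (hg0 x)
  have hI3' := T.abel4I3_eq (hdiff ha x) (hdiff hb x) (hdiff hc x) hf'x (hdiff hg x)
    (hdiff hh x) (hA (f x)) (hB (f x)) (hC (f x)) hfx (hg0 x)
  refine ⟨?_, ?_, ?_⟩
  · rw [hI1']
    exact div_ne_zero hI1 (by positivity)
  · rw [hI1', hI2', T.A_comp]
    field_simp [hg0 x]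
  · have h52 := abs_div_sq_rpow_half hw (abel4I1 a b c x) 5
    push_cast at h52
    rw [hI1', hI3', h52, div_div_div_cancel_right₀ (by positivity)]

/-- `J₁ = I₂I₀/I₁²` and `J₂ = I₃/|I₁|^{5/2}` (with `I₀ = a`) are
absolute differential invariants of generalized Abel equations of degree 4. -/
theorem abel_deg4_absolute_invariants
    (a b c d e f g h A B C D E : ℝ → ℝ)
    (ha : ContDiff ℝ (⊤ : ℕ∞) a) (hb : ContDiff ℝ (⊤ : ℕ∞) b)
    (hc : ContDiff ℝ (⊤ : ℕ∞) c) (hd : ContDiff ℝ (⊤ : ℕ∞) d)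
    (he : ContDiff ℝ (⊤ : ℕ∞) e)
    (hf : ContDiff ℝ (⊤ : ℕ∞) f) (hg : ContDiff ℝ (⊤ : ℕ∞) g)
    (hh : ContDiff ℝ (⊤ : ℕ∞) h)
    (hf' : ∀ x, 0 < deriv f x) (hg0 : ∀ x, g x ≠ 0)
    (hA : Differentiable ℝ A) (hB : Differentiable ℝ B)
    (hC : Differentiable ℝ C) (hD : Differentiable ℝ D)
    (hE : Differentiable ℝ E)
    (hAe : ∀ x, A (f x) = a x / (deriv f x * g x ^ 3))
    (hBe : ∀ x, B (f x) = (b x * g x - 4 * a x * h x) / (deriv f x * g x ^ 3))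
    (hCe : ∀ x, C (f x) = (6 * a x * h x ^ 2 - 3 * b x * g x * h x
      + c x * g x ^ 2) / (deriv f x * g x ^ 3))
    (hDe : ∀ x, D (f x) = (-4 * a x * h x ^ 3 + 3 * b x * g x * h x ^ 2
      - 2 * c x * g x ^ 2 * h x + d x * g x ^ 3 + deriv g x * g x ^ 2)
      / (deriv f x * g x ^ 3))
    (hEe : ∀ x, E (f x) = (a x * h x ^ 4 - b x * g x * h x ^ 3
      + c x * g x ^ 2 * h x ^ 2 - d x * g x ^ 3 * h x + e x * g x ^ 4
      + deriv h x * g x ^ 3 - deriv g x * g x ^ 2 * h x)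
      / (deriv f x * g x ^ 3)) :
    ∀ x, abel4I1 a b c x ≠ 0 →
      abel4I1 A B C (f x) ≠ 0
      ∧ abel4I2 A B C D E (f x) * A (f x) / abel4I1 A B C (f x) ^ 2
        = abel4I2 a b c d e x * a x / abel4I1 a b c x ^ 2
      ∧ abel4I3 A B C D (f x) / |abel4I1 A B C (f x)| ^ ((5:ℝ)/2)
        = abel4I3 a b c d x / |abel4I1 a b c x| ^ ((5:ℝ)/2) :=
  abel_deg4_absolute_invariants_general a b c d e f g h A B C D E ha hb hc hf hg hh hf' hg0 hA hB hC
    hAe hBe hCe hDe hEe
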